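/- arXiv:2601.16610 — 4 statements merged into one kernel-verified Lean document; each statement's English description precedes it below -/
import Mathlib

section
/- Let L > 0, c ∈ ℝ, λ ∈ ℂ with λ ≠ 0. If g ∈ C²([0,L], ℂ) satisfies g'' = λ²g, g(0) = 0, g'(L) + αλ g(L) = 0 with α > 1, and g is not identically zero, then e^{2λL} = (α-1)/(α+1). -/
open Set Complex

private lemma exp_hasDerivAt (μ : ℂ) (x : ℝ) :
    HasDerivAt (fun x : ℝ => Complex.exp (μ * x)) (μ * Complex.exp (μ * x)) x := by
  have h : HasDerivAt (fun x : ℝ => μ * (x : ℂ)) μ x := by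
    simpa using (Complex.ofRealCLM.hasDerivAt (x := x)).const_mul μ
  simpa [mul_comm] using h.cexp

/-- Solutions of `f' = μ f` on `Icc 0 L` are `f 0 * exp (μ x)`. -/
private lemma ode_sol (L : ℝ) (μ : ℂ) (f f' : ℝ → ℂ)
    (hd : ∀ x ∈ Icc (0:ℝ) L, HasDerivWithinAt f (f' x) (Icc 0 L) x)
    (heq : ∀ x ∈ Icc (0:ℝ) L, f' x = μ * f x) :
    ∀ x ∈ Icc (0:ℝ) L, f x = f 0 * Complex.exp (μ * x) := by
  set F : ℝ → ℂ := fun x => f x * Complex.exp (-μ * x) with hF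
  have hFd : ∀ x ∈ Icc (0:ℝ) L, HasDerivWithinAt F 0 (Icc 0 L) x := by
    intro x hx
    have h1 : HasDerivWithinAt F
        (f' x * Complex.exp (-μ * x) + f x * (-μ * Complex.exp (-μ * x))) (Icc 0 L) x :=
      (hd x hx).mul ((exp_hasDerivAt (-μ) x).hasDerivWithinAt)
    convert h1 using 1
    rw [heq x hx]; ring
  have key : ∀ x ∈ Icc (0:ℝ) L, F x = F 0 := by
    intro x hx
    have h0 : (0:ℝ) ∈ Icc (0:ℝ) L := ⟨le_refl 0, hx.1.trans hx.2⟩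
    have hb := (convex_Icc (0:ℝ) L).norm_image_sub_le_of_norm_hasDerivWithin_le
      (C := 0) hFd (fun y hy => by simp) h0 hx
    have hb' : ‖F x - F 0‖ ≤ 0 := by simpa using hb
    have : ‖F x - F 0‖ = 0 := le_antisymm hb' (norm_nonneg _)
    rw [norm_eq_zero, sub_eq_zero] at this
    exact this
  intro x hx
  have h2 : f x * Complex.exp (-μ * x) = f 0 := by
    have := key x hx
    simpa [hF] using this
  calc f x = f x * (Complex.exp (-μ * x) * Complex.exp (μ * x)) := by
        rw [← Complex.exp_add, show -μ * x + μ * x = 0 by ring, Complex.exp_zero, mul_one]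
    _ = f 0 * Complex.exp (μ * x) := by rw [← mul_assoc, h2]

/-- If `g ∈ C²([0,L],ℂ)` satisfies `g'' = λ² g`, `g(0)=0`, `g'(L) + αλ g(L) = 0`
with `α > 1`, `λ ≠ 0`, and `g` is not identically zero on `[0,L]`,
then `e^{2λL} = (α-1)/(α+1)`. -/
theorem stmt1 (L α : ℝ) (hL : 0 < L) (hα : 1 < α) (lam : ℂ) (hlam : lam ≠ 0)
    (g g' g'' : ℝ → ℂ)
    (hd1 : ∀ x ∈ Icc 0 L, HasDerivWithinAt g (g' x) (Icc 0 L) x)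
    (hd2 : ∀ x ∈ Icc 0 L, HasDerivWithinAt g' (g'' x) (Icc 0 L) x)
    (hcont : ContinuousOn g'' (Icc 0 L))
    (hode : ∀ x ∈ Icc 0 L, g'' x = lam ^ 2 * g x)
    (hbc0 : g 0 = 0)
    (hbcL : g' L + (α : ℂ) * lam * g L = 0)
    (hne : ∃ x ∈ Icc 0 L, g x ≠ 0) :
    Complex.exp (2 * lam * L) = ((α - 1) / (α + 1) : ℝ) := by
  have hk : ∀ x ∈ Icc (0:ℝ) L, g' x + lam * g x = (g' 0 + lam * g 0) * Complex.exp (lam * x) := by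
    apply ode_sol L lam (fun x => g' x + lam * g x) (fun x => g'' x + lam * g' x)
    · intro x hx
      exact (hd2 x hx).add ((hd1 x hx).const_mul lam)
    · intro x hx
      rw [hode x hx]; ring
  have hh : ∀ x ∈ Icc (0:ℝ) L, g' x - lam * g x = (g' 0 - lam * g 0) * Complex.exp (-lam * x) := by
    apply ode_sol L (-lam) (fun x => g' x - lam * g x) (fun x => g'' x - lam * g' x)
    · intro x hx
      exact (hd2 x hx).sub ((hd1 x hx).const_mul lam)
    · intro x hx
      rw [hode x hx]; ring
  set c : ℂ := g' 0 with hc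
  have hLL : L ∈ Icc (0:ℝ) L := ⟨le_of_lt hL, le_refl L⟩
  -- c ≠ 0, otherwise g ≡ 0
  have hcne : c ≠ 0 := by
    intro h0
    obtain ⟨x, hx, hgx⟩ := hne
    have e1 := hk x hx
    have e2 := hh x hx
    rw [hbc0, h0] at e1 e2
    simp only [mul_zero, add_zero, sub_zero, zero_mul] at e1 e2
    have hgx0 : lam * g x = 0 := by linear_combination (e1 - e2) / 2
    exact hgx ((mul_eq_zero.mp hgx0).resolve_left hlam)
  have e1 := hk L hLL
  have e2 := hh L hLL
  rw [hbc0] at e1 e2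
  simp only [mul_zero, add_zero, sub_zero] at e1 e2
  have hb : ((α : ℂ) + 1) * Complex.exp (lam * L) = ((α : ℂ) - 1) * Complex.exp (-lam * L) := by
    apply mul_left_cancel₀ hcne
    linear_combination (-((α : ℂ) + 1)) * e1 + ((α : ℂ) - 1) * e2 + 2 * hbcL
  have hα1 : ((α : ℂ) + 1) ≠ 0 := by
    have h1 : ((α + 1 : ℝ) : ℂ) ≠ 0 := Complex.ofReal_ne_zero.mpr (by linarith)
    push_cast at h1; exact h1
  have hE : Complex.exp (lam * L) * Complex.exp (-lam * L) = 1 := by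
    rw [← Complex.exp_add, show lam * (L:ℂ) + -lam * L = 0 by ring, Complex.exp_zero]
  have hE2 : Complex.exp (2 * lam * L) = Complex.exp (lam * L) * Complex.exp (lam * L) := by
    rw [← Complex.exp_add]; ring_nf
  push_cast
  rw [hE2, eq_div_iff hα1]
  linear_combination Complex.exp (lam * (L:ℂ)) * hb + ((α : ℂ) - 1) * hE
end

section
/- Let n ∈ ℕ*, λ = c - n²π²/L² ≠ 0, β ∈ C([0,L], ℝ), and suppose z ∈ C²([0,L], ℝ) satisfies z'' - λ² z = -A β(x) sin(nπx/L) with A ≠ 0 and z(0) = z(L) = z'(L) = 0. Then ∫₀^L β(s) sinh(λ s) sin(nπs/L) ds = 0. -/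
open Set Real intervalIntegral

/-- Overdetermined-system obstruction: if `z'' - λ² z = -A β(x) sin(nπx/L)`
on `[0,L]` with `A ≠ 0`, `λ = c - n²π²/L² ≠ 0` and `z(0)=z(L)=z'(L)=0`,
then `∫₀^L β(s) sinh(λs) sin(nπs/L) ds = 0`. -/
theorem stmt10 (L c : ℝ) (hL : 0 < L) (n : ℕ) (hn : 0 < n)
    (lam : ℝ) (hlam : lam = c - n ^ 2 * π ^ 2 / L ^ 2) (hlam0 : lam ≠ 0)
    (β : ℝ → ℝ) (hβ : ContinuousOn β (Icc 0 L)) (A : ℝ) (hA : A ≠ 0)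
    (z z' z'' : ℝ → ℝ)
    (hd1 : ∀ x ∈ Icc 0 L, HasDerivWithinAt z (z' x) (Icc 0 L) x)
    (hd2 : ∀ x ∈ Icc 0 L, HasDerivWithinAt z' (z'' x) (Icc 0 L) x)
    (hcont : ContinuousOn z'' (Icc 0 L))
    (hode : ∀ x ∈ Icc 0 L,
      z'' x - lam ^ 2 * z x = -A * β x * Real.sin (n * π * x / L))
    (hz0 : z 0 = 0) (hzL : z L = 0) (hz'L : z' L = 0) :
    (∫ s in (0:ℝ)..L, β s * Real.sinh (lam * s) * Real.sin (n * π * s / L)) = 0 := by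
  set g : ℝ → ℝ := fun x => z' x * Real.sinh (lam * x) - lam * (z x * Real.cosh (lam * x))
    with hg
  set g' : ℝ → ℝ := fun x => (z'' x - lam ^ 2 * z x) * Real.sinh (lam * x) with hg'
  have hzc : ContinuousOn z (Icc 0 L) := fun x hx => (hd1 x hx).continuousWithinAt
  have hz'c : ContinuousOn z' (Icc 0 L) := fun x hx => (hd2 x hx).continuousWithinAt
  have hsinh : ∀ x : ℝ, HasDerivAt (fun y => Real.sinh (lam * y)) (lam * Real.cosh (lam * x)) x := by
    intro x
    have : HasDerivAt (fun y => lam * y) lam x := by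
      simpa using (hasDerivAt_id x).const_mul lam
    simpa [mul_comm, Function.comp_def] using (Real.hasDerivAt_sinh (lam * x)).comp x this
  have hcosh : ∀ x : ℝ, HasDerivAt (fun y => Real.cosh (lam * y)) (lam * Real.sinh (lam * x)) x := by
    intro x
    have : HasDerivAt (fun y => lam * y) lam x := by
      simpa using (hasDerivAt_id x).const_mul lam
    simpa [mul_comm, Function.comp_def] using (Real.hasDerivAt_cosh (lam * x)).comp x this
  have hgd : ∀ x ∈ Icc 0 L, HasDerivWithinAt g (g' x) (Icc 0 L) x := by
    intro x hx
    have h1 := ((hd2 x hx).mul ((hsinh x).hasDerivWithinAt))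
    have h2 := (((hd1 x hx).mul ((hcosh x).hasDerivWithinAt)).const_mul lam)
    have := h1.sub h2
    refine this.congr_deriv ?_
    simp only [hg']
    ring
  have hgcont : ContinuousOn g (Icc 0 L) := by
    apply ContinuousOn.sub
    · exact hz'c.mul (Real.continuous_sinh.comp (continuous_const.mul continuous_id)).continuousOn
    · exact continuousOn_const.mul
        (hzc.mul (Real.continuous_cosh.comp (continuous_const.mul continuous_id)).continuousOn)
  have hg'cont : ContinuousOn g' (Icc 0 L) := by
    apply ContinuousOn.mul
    · exact hcont.sub (continuousOn_const.mul hzc)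
    · exact (Real.continuous_sinh.comp (continuous_const.mul continuous_id)).continuousOn
  have hg'int : IntervalIntegrable g' MeasureTheory.volume 0 L := by
    apply ContinuousOn.intervalIntegrable
    rwa [uIcc_of_le hL.le]
  have key : (∫ x in (0:ℝ)..L, g' x) = g L - g 0 :=
    intervalIntegral.integral_eq_sub_of_hasDeriv_right_of_le hL.le hgcont
      (fun x hx => (hgd x (Ioo_subset_Icc_self hx)).mono_of_mem_nhdsWithin
        (Filter.mem_of_superset (Icc_mem_nhdsGT_of_mem ⟨le_refl _, hx.2⟩)
          (fun y hy => ⟨hx.1.le.trans hy.1, hy.2⟩)))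
      hg'int
  have hgL : g L = 0 := by simp [hg, hzL, hz'L]
  have hg0 : g 0 = 0 := by simp [hg, hz0]
  have hcongr : (∫ x in (0:ℝ)..L, g' x)
      = ∫ x in (0:ℝ)..L, -A * (β x * Real.sinh (lam * x) * Real.sin (n * π * x / L)) := by
    apply intervalIntegral.integral_congr
    intro x hx
    rw [uIcc_of_le hL.le] at hx
    simp only [hg', hode x hx]
    ring
  have : -A * (∫ x in (0:ℝ)..L, β x * Real.sinh (lam * x) * Real.sin (n * π * x / L)) = 0 := by
    rw [← intervalIntegral.integral_const_mul, ← hcongr, key, hgL, hg0, sub_zero]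
  have hA' : -A ≠ 0 := neg_ne_zero.mpr hA
  exact (mul_eq_zero.mp this).resolve_left hA'
end

section
/- Let A₀ = diag(λ₁,…,λ_N) ∈ ℝ^{N×N} with pairwise distinct nonzero λ_k, and let B_a, B_b ∈ ℝ^N. Define the augmented matrix A₁ = [[0, 0],[B_a, A₀]] ∈ ℝ^{(N+1)×(N+1)} and B₁ = (1, B_b)ᵀ ∈ ℝ^{N+1}. Then (A₁, B₁) satisfies the Kalman rank condition if and only if, for every k, the k-th entry of B_a + λ_k B_b is nonzero. -/
open Matrix

/-- Kalman controllability matrix of a pair `(A, B)` with scalar input: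
columns `B, AB, …, Aⁿ⁻¹B` where `n = N + 1`. -/
def ctrbMatrix {N : ℕ} (A : Matrix (Unit ⊕ Fin N) (Unit ⊕ Fin N) ℝ)
    (B : (Unit ⊕ Fin N) → ℝ) : Matrix (Unit ⊕ Fin N) (Fin (N + 1)) ℝ :=
  Matrix.of fun i j => ((A ^ (j : ℕ)).mulVec B) i

/-- Rank of a square real matrix equals the cardinality iff the determinant is nonzero. -/
lemma rank_eq_card_iff_det_ne_zero {n : Type*} [Fintype n] [DecidableEq n] (A : Matrix n n ℝ) :
    A.rank = Fintype.card n ↔ A.det ≠ 0 := by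
  constructor
  · intro h hdet
    obtain ⟨v, hv, hAv⟩ := Matrix.exists_mulVec_eq_zero_iff.2 hdet
    have hmem : v ∈ LinearMap.ker A.mulVecLin := by
      simpa [Matrix.mulVecLin_apply] using hAv
    have hker : 0 < Module.finrank ℝ (LinearMap.ker A.mulVecLin) :=
      Module.finrank_pos_iff.2 ⟨⟨⟨v, hmem⟩, 0, by simpa using hv⟩⟩
    have hrn := LinearMap.finrank_range_add_finrank_ker A.mulVecLin
    rw [Module.finrank_pi] at hrn
    have : A.rank + Module.finrank ℝ (LinearMap.ker A.mulVecLin) = Fintype.card n := hrn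
    omega
  · intro hdet
    exact Matrix.rank_of_isUnit A ((Matrix.isUnit_iff_isUnit_det _).2 hdet.isUnit)

/-- Permuting the columns of a matrix preserves rank. -/
lemma rank_submatrix_cols {m l n : Type*} [Fintype n] [Fintype l]
    (A : Matrix m n ℝ) (e : l ≃ n) : (A.submatrix id e).rank = A.rank := by
  rw [Matrix.rank, Matrix.rank, Matrix.mulVecLin_submatrix]
  have h1 : LinearMap.funLeft ℝ ℝ (id : m → m) = LinearMap.id := by
    ext f x; simp [LinearMap.funLeft]
  rw [h1, LinearMap.id_comp, LinearMap.range_comp_of_range_eq_top]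
  rw [LinearMap.range_eq_top]
  intro g
  exact ⟨g ∘ e, by ext x; simp [LinearMap.funLeft]⟩

def sumFinEquiv (N : ℕ) : Unit ⊕ Fin N ≃ Fin (N + 1) where
  toFun := Sum.elim (fun _ => 0) Fin.succ
  invFun := Fin.cases (Sum.inl ()) Sum.inr
  left_inv := by rintro (⟨⟩ | k) <;> simp
  right_inv := fun j => Fin.cases rfl (fun k => by simp) j

/-- For `A₀ = diag(λ₁,…,λ_N)` with pairwise distinct nonzero entries and
`B_a, B_b ∈ ℝᴺ`, the augmented pair `A₁ = [[0,0],[B_a,A₀]]`, `B₁ = (1,B_b)ᵀ`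
satisfies the Kalman rank condition iff `(B_a + λ_k B_b)_k ≠ 0` for every `k`. -/
theorem stmt13 {N : ℕ} (hN : 0 < N) (lam : Fin N → ℝ)
    (hdist : Function.Injective lam) (hne : ∀ k, lam k ≠ 0)
    (Ba Bb : Fin N → ℝ) :
    (ctrbMatrix
        (Matrix.fromBlocks (0 : Matrix Unit Unit ℝ) (0 : Matrix Unit (Fin N) ℝ)
          (Matrix.of fun i _ => Ba i) (Matrix.diagonal lam))
        (Sum.elim (fun _ => (1 : ℝ)) Bb)).rank = N + 1 ↔
      ∀ k, Ba k + lam k * Bb k ≠ 0 := by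
  set A : Matrix (Unit ⊕ Fin N) (Unit ⊕ Fin N) ℝ :=
    Matrix.fromBlocks (0 : Matrix Unit Unit ℝ) (0 : Matrix Unit (Fin N) ℝ)
      (Matrix.of fun i _ => Ba i) (Matrix.diagonal lam) with hA
  set B : (Unit ⊕ Fin N) → ℝ := Sum.elim (fun _ => (1 : ℝ)) Bb with hB
  set c : Fin N → ℝ := fun k => Ba k + lam k * Bb k with hcdef
  -- powers applied to B
  have hpow : ∀ j : ℕ, (A ^ (j + 1)).mulVec B =
      Sum.elim (fun _ => (0 : ℝ)) (fun k => lam k ^ j * c k) := by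
    intro j
    induction j with
    | zero =>
      rw [pow_one, hA, hB, Matrix.fromBlocks_mulVec]
      funext i
      rcases i with u | k
      · simp
      · simp [Matrix.mulVec, dotProduct, Matrix.diagonal_apply, hcdef,
          Finset.mul_sum, mul_comm]
    | succ j ih =>
      rw [pow_succ', ← Matrix.mulVec_mulVec, ih, hA, Matrix.fromBlocks_mulVec]
      funext i
      rcases i with u | k
      · simp
      · simp only [Sum.elim_inr]
        simp [Matrix.mulVec, dotProduct, Matrix.diagonal_apply]
        ring
  set M := ctrbMatrix A B with hM
  set M₂ := M.submatrix id (sumFinEquiv N) with hM₂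
  have hrank : M.rank = M₂.rank := (rank_submatrix_cols M (sumFinEquiv N)).symm
  have hM₂eq : M₂ = Matrix.fromBlocks (1 : Matrix Unit Unit ℝ) 0
      (Matrix.of fun k (_ : Unit) => Bb k)
      (Matrix.of fun k (l : Fin N) => lam k ^ (l : ℕ) * c k) := by
    ext i j
    rcases i with u | k <;> rcases j with u' | l
    · simp [hM₂, hM, ctrbMatrix, sumFinEquiv, hB]
    · simp [hM₂, hM, ctrbMatrix, sumFinEquiv, hpow]
    · simp [hM₂, hM, ctrbMatrix, sumFinEquiv, hB]
    · simp [hM₂, hM, ctrbMatrix, sumFinEquiv, hpow]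
  have hdet : M₂.det = (∏ k, c k) * (Matrix.vandermonde lam).det := by
    rw [hM₂eq, Matrix.det_fromBlocks_zero₁₂]
    have hDeq : (Matrix.of fun k (l : Fin N) => lam k ^ (l : ℕ) * c k) =
        Matrix.diagonal c * Matrix.vandermonde lam := by
      ext k l
      simp [Matrix.diagonal_mul, Matrix.vandermonde, mul_comm]
    rw [hDeq, Matrix.det_mul, Matrix.det_diagonal, Matrix.det_one, one_mul]
  have hcard : N + 1 = Fintype.card (Unit ⊕ Fin N) := by
    simp [Fintype.card_sum, add_comm]
  rw [hrank, hcard, rank_eq_card_iff_det_ne_zero, hdet, mul_ne_zero_iff]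
  have hV : (Matrix.vandermonde lam).det ≠ 0 := Matrix.det_vandermonde_ne_zero_iff.2 hdist
  simp [hV, Finset.prod_ne_zero_iff, hcdef]
end

section
/- Let H be a Hilbert space, (e_k)_{k∈ℕ} a Riesz basis of H, and (f_k)_{k∈ℕ} an ω-linearly independent family in H with Σ_k ‖f_k - e_k‖² < ∞. Then (f_k) is a Riesz basis of H (Bari's theorem application). -/
open scoped BigOperators

open scoped InnerProductSpace

namespace BariAux
variable {H : Type*} [NormedAddCommGroup H] [InnerProductSpace ℂ H]

lemma summable_mul_of_sq (a c : ℕ → ℝ) (ha2 : Summable fun k => a k ^ 2)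
    (hc2 : Summable fun k => c k ^ 2) (ha : ∀ k, 0 ≤ a k) (hc : ∀ k, 0 ≤ c k) :
    Summable (fun k => a k * c k) := by
  refine Summable.of_nonneg_of_le (fun k => mul_nonneg (ha k) (hc k)) (fun k => ?_)
    ((ha2.add hc2).div_const 2)
  have := two_mul_le_add_sq (a k) (c k)
  nlinarith

lemma tsum_mul_le_sqrt (a c : ℕ → ℝ) (ha2 : Summable fun k => a k ^ 2)
    (hc2 : Summable fun k => c k ^ 2) (ha : ∀ k, 0 ≤ a k) (hc : ∀ k, 0 ≤ c k) :
    ∑' k, a k * c k ≤ Real.sqrt (∑' k, a k ^ 2) * Real.sqrt (∑' k, c k ^ 2) := by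
  refine Summable.tsum_le_of_sum_le (summable_mul_of_sq a c ha2 hc2 ha hc) (fun s => ?_)
  refine (Real.sum_mul_le_sqrt_mul_sqrt s a c).trans ?_
  have g1 : ∑ i ∈ s, a i ^ 2 ≤ ∑' k, a k ^ 2 := Summable.sum_le_tsum s (fun k _ => sq_nonneg _) ha2
  have g2 : ∑ i ∈ s, c i ^ 2 ≤ ∑' k, c k ^ 2 := Summable.sum_le_tsum s (fun k _ => sq_nonneg _) hc2
  gcongr

lemma parseval_summable (b : HilbertBasis ℕ ℂ H) (x : H) :
    Summable (fun k => ‖⟪b k, x⟫_ℂ‖ ^ 2) := by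
  have h := lp.memℓp (b.repr x)
  have h2 : (0:ℝ) < (2 : ENNReal).toReal := by norm_num
  have := (memℓp_gen_iff h2).mp h
  simp only [ENNReal.toReal_ofNat] at this
  convert this using 2 with k
  rw [← b.repr_apply_apply x k, Real.rpow_two]

lemma parseval_tsum (b : HilbertBasis ℕ ℂ H) (x : H) :
    ∑' k, ‖⟪b k, x⟫_ℂ‖ ^ 2 = ‖x‖ ^ 2 := by
  have h2 : (0:ℝ) < (2 : ENNReal).toReal := by norm_num
  have := lp.norm_rpow_eq_tsum h2 (b.repr x)
  simp only [ENNReal.toReal_ofNat] at this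
  rw [b.repr.norm_map] at this
  rw [← Real.rpow_two, this]
  exact tsum_congr fun k => by rw [← b.repr_apply_apply x k, Real.rpow_two]

variable [CompleteSpace H]

lemma summable_norm_coef (b : HilbertBasis ℕ ℂ H) (d : ℕ → H)
    (hd : Summable fun k => ‖d k‖ ^ 2) (x : H) :
    Summable (fun k => ‖⟪b k, x⟫_ℂ • d k‖) := by
  simp only [norm_smul]
  exact summable_mul_of_sq _ _ (parseval_summable b x) hd (fun k => norm_nonneg _)
    (fun k => norm_nonneg _)

noncomputable def bariCLM (b : HilbertBasis ℕ ℂ H) (d : ℕ → H)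
    (hd : Summable fun k => ‖d k‖ ^ 2) : H →L[ℂ] H :=
  LinearMap.mkContinuous
    { toFun := fun x => ∑' k, ⟪b k, x⟫_ℂ • d k
      map_add' := fun x y => by
        show ∑' k, ⟪b k, x + y⟫_ℂ • d k = (∑' k, ⟪b k, x⟫_ℂ • d k) + ∑' k, ⟪b k, y⟫_ℂ • d k
        rw [← Summable.tsum_add ((summable_norm_coef b d hd x).of_norm)
          ((summable_norm_coef b d hd y).of_norm)]
        exact tsum_congr fun k => by rw [inner_add_right, add_smul]
      map_smul' := fun c x => by
        show ∑' k, ⟪b k, c • x⟫_ℂ • d k = c • ∑' k, ⟪b k, x⟫_ℂ • d k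
        rw [← tsum_const_smul'' c]
        exact tsum_congr fun k => by rw [inner_smul_right, mul_smul] }
    (Real.sqrt (∑' k, ‖d k‖ ^ 2))
    (fun x => by
      refine (norm_tsum_le_tsum_norm (summable_norm_coef b d hd x)).trans ?_
      calc ∑' k, ‖⟪b k, x⟫_ℂ • d k‖ = ∑' k, ‖⟪b k, x⟫_ℂ‖ * ‖d k‖ := by
            simp only [norm_smul]
        _ ≤ Real.sqrt (∑' k, ‖⟪b k, x⟫_ℂ‖ ^ 2) * Real.sqrt (∑' k, ‖d k‖ ^ 2) :=
            tsum_mul_le_sqrt _ _ (parseval_summable b x) hd (fun k => norm_nonneg _)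
              (fun k => norm_nonneg _)
        _ = Real.sqrt (∑' k, ‖d k‖ ^ 2) * ‖x‖ := by
            rw [parseval_tsum, Real.sqrt_sq (norm_nonneg x), mul_comm])

lemma bariCLM_apply (b : HilbertBasis ℕ ℂ H) (d : ℕ → H)
    (hd : Summable fun k => ‖d k‖ ^ 2) (x : H) :
    bariCLM b d hd x = ∑' k, ⟪b k, x⟫_ℂ • d k := rfl

lemma bariCLM_norm_le (b : HilbertBasis ℕ ℂ H) (d : ℕ → H)
    (hd : Summable fun k => ‖d k‖ ^ 2) :
    ‖bariCLM b d hd‖ ≤ Real.sqrt (∑' k, ‖d k‖ ^ 2) :=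
  LinearMap.mkContinuous_norm_le _ (Real.sqrt_nonneg _) _

lemma bariCLM_basis (b : HilbertBasis ℕ ℂ H) (d : ℕ → H)
    (hd : Summable fun k => ‖d k‖ ^ 2) (j : ℕ) :
    bariCLM b d hd (b j) = d j := by
  rw [bariCLM_apply]
  rw [tsum_eq_single j ?_]
  · rw [(orthonormal_iff_ite.mp b.orthonormal) j j]; simp
  · intro k hk
    rw [(orthonormal_iff_ite.mp b.orthonormal) k j]
    simp [hk]

lemma bariCLM_mem_span (b : HilbertBasis ℕ ℂ H) (d : ℕ → H)
    (hd : Summable fun k => ‖d k‖ ^ 2) (N : ℕ) (hdN : ∀ k, N ≤ k → d k = 0) (x : H) :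
    bariCLM b d hd x ∈ Submodule.span ℂ (d '' Set.Iio N) := by
  rw [bariCLM_apply, tsum_eq_sum (s := Finset.range N)
    (fun k hk => by rw [hdN k (le_of_not_gt fun h => hk (Finset.mem_range.mpr h)), smul_zero])]
  exact Submodule.sum_mem _ fun k hk => Submodule.smul_mem _ _
    (Submodule.subset_span ⟨k, Finset.mem_range.mp hk, rfl⟩)

lemma surjective_one_add (G : H →ₗ[ℂ] H) (W : Submodule ℂ H) [FiniteDimensional ℂ W]
    (hr : ∀ x, G x ∈ W) (hinj : ∀ x, x + G x = 0 → x = 0) :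
    ∀ y, ∃ x, x + G x = y := by
  set v : W →ₗ[ℂ] W :=
    { toFun := fun w => ⟨(w : H) + G w, W.add_mem w.2 (hr w)⟩
      map_add' := fun w1 w2 => by
        ext
        push_cast [map_add]
        abel
      map_smul' := fun c w => by
        ext
        push_cast [map_smul]
        simp [smul_add] } with hv
  have hvinj : Function.Injective v := by
    intro w1 w2 h
    have h' : (w1 : H) + G w1 = (w2 : H) + G w2 := congrArg Subtype.val h
    have h2 : ((w1 : H) - w2) + G ((w1 : H) - w2) = 0 := by
      rw [map_sub]
      rw [show (w1:H) - w2 + (G w1 - G w2) = ((w1:H) + G w1) - ((w2:H) + G w2) by abel, h']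
      abel
    have := hinj _ h2
    exact Subtype.ext (by rwa [sub_eq_zero] at this)
  have hvsurj := LinearMap.injective_iff_surjective.mp hvinj
  intro y
  obtain ⟨z, hz⟩ := hvsurj ⟨G y, hr y⟩
  have hz' : (z : H) + G z = G y := congrArg Subtype.val hz
  refine ⟨y - z, ?_⟩
  rw [map_sub]
  rw [show y - (z:H) + (G y - G z) = y + (G y - ((z:H) + G z)) by abel, hz']
  abel

end BariAux


/-- `f` is a Riesz basis of the Hilbert space `H`: the image of an orthonormal
basis under a bounded invertible operator. -/
def IsRieszBasis {H : Type*} [NormedAddCommGroup H] [InnerProductSpace ℂ H]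
    (f : ℕ → H) : Prop :=
  ∃ (b : HilbertBasis ℕ ℂ H) (T : H ≃L[ℂ] H), ∀ k, f k = T (b k)

/-- Bari's theorem (quadratic closeness criterion): an ω-linearly independent
family quadratically close to a Riesz basis is itself a Riesz basis. -/
theorem stmt15 {H : Type*} [NormedAddCommGroup H] [InnerProductSpace ℂ H]
    [CompleteSpace H] (e f : ℕ → H)
    (he : IsRieszBasis e)
    (homega : ∀ c : ℕ → ℂ, HasSum (fun k => c k • f k) 0 → ∀ k, c k = 0)
    (hclose : Summable (fun k => ‖f k - e k‖ ^ 2)) :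
    IsRieszBasis f := by
  classical
  obtain ⟨b, T, hT⟩ := he
  rcases subsingleton_or_nontrivial H with htriv | hnt
  · exact ⟨b, T, fun k => Subsingleton.elim _ _⟩
  set d : ℕ → H := fun j => f j - e j with hd_def
  have hd : Summable fun k => ‖d k‖ ^ 2 := hclose
  set S : H →L[ℂ] H := (T : H →L[ℂ] H) + BariAux.bariCLM b d hd with hS
  have hSb : ∀ k, S (b k) = f k := by
    intro k
    rw [hS, ContinuousLinearMap.add_apply, BariAux.bariCLM_basis,
      ContinuousLinearEquiv.coe_coe, ← hT k]
    simp [hd_def]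
  have hS0 : ∀ x, S x = 0 → x = 0 := by
    intro x hx
    have h2 := (b.hasSum_repr x).mapL S
    rw [hx] at h2
    simp only [map_smul] at h2
    simp only [hSb] at h2
    have h4 := homega _ h2
    have hz : b.repr x = 0 := by
      ext k
      simpa using h4 k
    have := congrArg b.repr.symm hz
    simpa using this
  set u0 : (H →L[ℂ] H)ˣ := T.toUnit with hu0
  have hu0inv : (↑u0⁻¹ : H →L[ℂ] H) = (T.symm : H →L[ℂ] H) := rfl
  have hinvnorm : 0 < ‖(↑u0⁻¹ : H →L[ℂ] H)‖⁻¹ := by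
    rw [hu0inv, inv_pos, norm_pos_iff]
    intro h0
    obtain ⟨x, hx⟩ := exists_ne (0 : H)
    apply hx
    calc x = T.symm (T x) := (T.symm_apply_apply x).symm
      _ = (0 : H →L[ℂ] H) (T x) := by rw [← h0]; rfl
      _ = 0 := rfl
  set ε := ‖(↑u0⁻¹ : H →L[ℂ] H)‖⁻¹ with hε
  obtain ⟨N, hN⟩ : ∃ N, ∑' k, ‖d (k + N)‖ ^ 2 < ε ^ 2 := by
    have ht := tendsto_sum_nat_add (fun k => ‖d k‖ ^ 2)
    have hp : (0:ℝ) < ε ^ 2 := by positivity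
    exact (ht.eventually_lt_const hp).exists
  set dt : ℕ → H := fun k => if k < N then 0 else d k with hdt_def
  set dh : ℕ → H := fun k => if k < N then d k else 0 with hdh_def
  have hdt : Summable fun k => ‖dt k‖ ^ 2 := by
    refine Summable.of_nonneg_of_le (fun k => by positivity) (fun k => ?_) hd
    by_cases hk : k < N <;> simp [hdt_def, hk] <;> positivity
  have hdh : Summable fun k => ‖dh k‖ ^ 2 := by
    refine Summable.of_nonneg_of_le (fun k => by positivity) (fun k => ?_) hd
    by_cases hk : k < N <;> simp [hdh_def, hk] <;> positivity
  have htail : ∑' k, ‖dt k‖ ^ 2 < ε ^ 2 := by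
    have h1 := Summable.sum_add_tsum_nat_add (f := fun k => ‖dt k‖ ^ 2) N hdt
    have h2 : ∑ i ∈ Finset.range N, ‖dt i‖ ^ 2 = 0 :=
      Finset.sum_eq_zero fun i hi => by simp [hdt_def, Finset.mem_range.mp hi]
    have h3 : ∀ i : ℕ, dt (i + N) = d (i + N) := fun i => by
      simp [hdt_def, Nat.not_lt.mpr (Nat.le_add_left N i)]
    rw [← h1, h2, zero_add]
    calc ∑' i : ℕ, ‖dt (i + N)‖ ^ 2 = ∑' i : ℕ, ‖d (i + N)‖ ^ 2 :=
          tsum_congr fun i => by rw [h3]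
      _ < ε ^ 2 := hN
  have hεpos : 0 < ε := hinvnorm
  have hKt : ‖BariAux.bariCLM b dt hdt‖ < ‖(↑u0⁻¹ : H →L[ℂ] H)‖⁻¹ := by
    rw [← hε]
    exact lt_of_le_of_lt (BariAux.bariCLM_norm_le b dt hdt)
      ((Real.sqrt_lt' hεpos).mpr htail)
  set u : (H →L[ℂ] H)ˣ := u0.add _ hKt with hu
  have huval : (↑u : H →L[ℂ] H) = (T : H →L[ℂ] H) + BariAux.bariCLM b dt hdt := rfl
  have huu : ∀ y, (↑u : H →L[ℂ] H) ((↑u⁻¹ : H →L[ℂ] H) y) = y := fun y => by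
    rw [← ContinuousLinearMap.mul_apply, u.mul_inv, ContinuousLinearMap.one_apply]
  set Kh := BariAux.bariCLM b dh hdh with hKh
  have hsplit : ∀ x, S x = (↑u : H →L[ℂ] H) x + Kh x := by
    intro x
    have hKsplit : BariAux.bariCLM b d hd x
        = BariAux.bariCLM b dt hdt x + Kh x := by
      rw [hKh, BariAux.bariCLM_apply, BariAux.bariCLM_apply, BariAux.bariCLM_apply,
        ← Summable.tsum_add ((BariAux.summable_norm_coef b dt hdt x).of_norm)
          ((BariAux.summable_norm_coef b dh hdh x).of_norm)]
      refine tsum_congr fun k => ?_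
      by_cases hk : k < N <;> simp [hdt_def, hdh_def, hk]
    rw [hS, ContinuousLinearMap.add_apply, hKsplit, huval, ContinuousLinearMap.add_apply]
    abel
  set W0 : Submodule ℂ H := Submodule.span ℂ (dh '' Set.Iio N) with hW0
  haveI : FiniteDimensional ℂ W0 :=
    FiniteDimensional.span_of_finite ℂ ((Set.finite_Iio N).image dh)
  set G : H →ₗ[ℂ] H := (((↑u⁻¹ : H →L[ℂ] H).comp Kh) : H →ₗ[ℂ] H) with hG
  set W : Submodule ℂ H := W0.map ((↑u⁻¹ : H →L[ℂ] H) : H →ₗ[ℂ] H) with hW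
  have hGr : ∀ x, G x ∈ W := fun x =>
    ⟨Kh x, by
      rw [hKh]
      exact BariAux.bariCLM_mem_span b dh hdh N
        (fun k hk => by simp [hdh_def, Nat.not_lt.mpr hk]) x, rfl⟩
  have hkey : ∀ x, (↑u : H →L[ℂ] H) (x + G x) = S x := by
    intro x
    rw [map_add, hG]
    have : (↑u : H →L[ℂ] H) ((((↑u⁻¹ : H →L[ℂ] H).comp Kh) : H →ₗ[ℂ] H) x) = Kh x := huu _
    rw [this]
    exact (hsplit x).symm
  have hGinj : ∀ x, x + G x = 0 → x = 0 := by
    intro x hx0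
    apply hS0
    rw [← hkey x, hx0, map_zero]
  have hsurjG := BariAux.surjective_one_add G W hGr hGinj
  have hSsurj : Function.Surjective S := by
    intro y
    obtain ⟨x, hx⟩ := hsurjG ((↑u⁻¹ : H →L[ℂ] H) y)
    exact ⟨x, by rw [← hkey x, hx, huu]⟩
  have hker : S.ker = ⊥ := (LinearMap.ker_eq_bot' (f := (S : H →ₗ[ℂ] H))).mpr fun m hm => hS0 m hm
  have hrange : S.range = ⊤ := (LinearMap.range_eq_top (f := (S : H →ₗ[ℂ] H))).mpr hSsurj
  exact ⟨b, ContinuousLinearEquiv.ofBijective S hker hrange, fun k => by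
    rw [← hSb k]; rfl⟩
end
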